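/- arXiv:1502.07533 — 6 statements merged into one kernel-verified Lean document; each statement's English description precedes it below -/
import Mathlib

section
/- If Q is a subgenerator, then e^Q is substochastic, i.e., e^Q · 1 ≤ 1 componentwise; in particular each row sum of e^Q lies in [0,1]. -/
/-- A subgenerator: nonnegative off-diagonal entries and nonpositive row sums. -/
def IsSubgenerator {k : Type*} [Fintype k] [DecidableEq k] (Q : Matrix k k ℝ) : Prop :=
  (∀ i j, i ≠ j → 0 ≤ Q i j) ∧ ∀ i, ∑ j, Q i j ≤ 0

open NormedSpace in
lemma pow_entry_nonneg {m : ℕ} {A : Matrix (Fin m) (Fin m) ℝ} (hA : ∀ i j, 0 ≤ A i j) :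
    ∀ (n : ℕ) i j, 0 ≤ (A ^ n) i j := by
  intro n
  induction n with
  | zero => intro i j; simp [Matrix.one_apply]; positivity
  | succ n ih =>
    intro i j
    rw [pow_succ', Matrix.mul_apply]
    exact Finset.sum_nonneg fun k _ => mul_nonneg (hA i k) (ih k j)

lemma pow_rowsum_le {m : ℕ} {A : Matrix (Fin m) (Fin m) ℝ} {c : ℝ} (hc : 0 ≤ c)
    (hA : ∀ i j, 0 ≤ A i j) (hrow : ∀ i, ∑ j, A i j ≤ c) :
    ∀ (n : ℕ) i, ∑ j, (A ^ n) i j ≤ c ^ n := by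
  intro n
  induction n with
  | zero => intro i; simp [Matrix.one_apply]
  | succ n ih =>
    intro i
    rw [pow_succ']
    calc ∑ j, (A * A ^ n) i j = ∑ k, A i k * ∑ j, (A ^ n) k j := by
          simp only [Matrix.mul_apply, Finset.mul_sum]
          rw [Finset.sum_comm]
      _ ≤ ∑ k, A i k * c ^ n :=
          Finset.sum_le_sum fun k _ =>
            mul_le_mul_of_nonneg_left (ih k) (hA i k)
      _ = (∑ k, A i k) * c ^ n := by rw [Finset.sum_mul]
      _ ≤ c * c ^ n := mul_le_mul_of_nonneg_right (hrow i) (pow_nonneg hc n)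
      _ = c ^ (n + 1) := (pow_succ' c n).symm

open NormedSpace in
lemma exp_entry_hasSum {m : ℕ} (A : Matrix (Fin m) (Fin m) ℝ) (i j : Fin m) :
    HasSum (fun n : ℕ => ((Nat.factorial n : ℝ))⁻¹ * (A ^ n) i j) (exp A i j) := by
  letI : SeminormedRing (Matrix (Fin m) (Fin m) ℝ) := Matrix.linftyOpSemiNormedRing
  letI : NormedRing (Matrix (Fin m) (Fin m) ℝ) := Matrix.linftyOpNormedRing
  letI : NormedAlgebra ℝ (Matrix (Fin m) (Fin m) ℝ) := Matrix.linftyOpNormedAlgebra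
  have h := exp_series_hasSum_exp' (𝕂 := ℝ) A
  have h1 := (Pi.hasSum.mp h) i
  have h2 := (Pi.hasSum.mp h1) j
  simp [Matrix.smul_apply, smul_eq_mul] at h2
  exact h2

/-- If `Q` is a subgenerator, then `e^Q` is substochastic: it is entrywise nonnegative,
`e^Q · 1 ≤ 1` componentwise, and each row sum lies in `[0,1]`. -/
theorem exp_subgenerator_substochastic {m : ℕ} (Q : Matrix (Fin m) (Fin m) ℝ)
    (hQ : IsSubgenerator Q) :
    (∀ i j, 0 ≤ NormedSpace.exp Q i j) ∧
    (∀ i, (NormedSpace.exp Q).mulVec (fun _ => (1 : ℝ)) i ≤ 1) ∧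
    (∀ i, ∑ j, NormedSpace.exp Q i j ∈ Set.Icc (0 : ℝ) 1) := by
  classical
  obtain ⟨hoff, hrowQ⟩ := hQ
  set c : ℝ := ∑ i, |Q i i| with hc_def
  have hc : 0 ≤ c := Finset.sum_nonneg fun i _ => abs_nonneg _
  have hcQ : ∀ i, -Q i i ≤ c := by
    intro i
    calc -Q i i ≤ |Q i i| := neg_le_abs _
      _ ≤ c := Finset.single_le_sum (f := fun i => |Q i i|)
          (fun j _ => abs_nonneg _) (Finset.mem_univ i)
  set A : Matrix (Fin m) (Fin m) ℝ := Q + c • (1 : Matrix (Fin m) (Fin m) ℝ) with hA_def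
  have hA : ∀ i j, 0 ≤ A i j := by
    intro i j
    by_cases h : i = j
    · subst h
      simp only [hA_def, Matrix.add_apply, Matrix.smul_apply, Matrix.one_apply_eq,
        smul_eq_mul, mul_one]
      linarith [hcQ i]
    · simp only [hA_def, Matrix.add_apply, Matrix.smul_apply, Matrix.one_apply_ne h,
        smul_eq_mul, mul_zero, add_zero]
      exact hoff i j h
  have hrowA : ∀ i, ∑ j, A i j ≤ c := by
    intro i
    simp only [hA_def, Matrix.add_apply, Finset.sum_add_distrib]
    have : ∑ j, (c • (1 : Matrix (Fin m) (Fin m) ℝ)) i j = c := by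
      simp [Matrix.smul_apply, Matrix.one_apply, Finset.sum_ite_eq]
    rw [this]
    linarith [hrowQ i]
  -- exp Q = Real.exp (-c) • exp A
  have hsplit : NormedSpace.exp Q = Real.exp (-c) • NormedSpace.exp A := by
    letI : SeminormedRing (Matrix (Fin m) (Fin m) ℝ) := Matrix.linftyOpSemiNormedRing
    letI : NormedRing (Matrix (Fin m) (Fin m) ℝ) := Matrix.linftyOpNormedRing
    letI : NormedAlgebra ℝ (Matrix (Fin m) (Fin m) ℝ) := Matrix.linftyOpNormedAlgebra
    have hQA : Q = A + algebraMap ℝ (Matrix (Fin m) (Fin m) ℝ) (-c) := by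
      rw [Algebra.algebraMap_eq_smul_one, hA_def, neg_smul]
      abel
    have hcomm : Commute A (algebraMap ℝ (Matrix (Fin m) (Fin m) ℝ) (-c)) :=
      (Algebra.commutes (-c) A).symm
    have he : NormedSpace.exp (algebraMap ℝ (Matrix (Fin m) (Fin m) ℝ) (-c)) =
        algebraMap ℝ (Matrix (Fin m) (Fin m) ℝ) (NormedSpace.exp (-c)) :=
      (NormedSpace.algebraMap_exp_comm (-c)).symm
    rw [hQA, Matrix.exp_add_of_commute _ _ hcomm, he,
      Algebra.algebraMap_eq_smul_one, mul_smul_comm, mul_one, ← Real.exp_eq_exp_ℝ]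
  have hEA : ∀ i j, 0 ≤ NormedSpace.exp A i j := by
    intro i j
    refine (exp_entry_hasSum A i j).nonneg fun n => ?_
    exact mul_nonneg (by positivity) (pow_entry_nonneg hA n i j)
  have hEArow : ∀ i, ∑ j, NormedSpace.exp A i j ≤ Real.exp c := by
    intro i
    have h1 : HasSum (fun n : ℕ => ∑ j, ((Nat.factorial n : ℝ))⁻¹ * (A ^ n) i j)
        (∑ j, NormedSpace.exp A i j) :=
      hasSum_sum fun j _ => exp_entry_hasSum A i j
    have h2 : HasSum (fun n : ℕ => ((Nat.factorial n : ℝ))⁻¹ * c ^ n) (Real.exp c) := by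
      have := NormedSpace.exp_series_hasSum_exp' (𝕂 := ℝ) c
      simpa [Real.exp_eq_exp_ℝ, smul_eq_mul] using this
    refine hasSum_le (fun n => ?_) h1 h2
    rw [← Finset.mul_sum]
    exact mul_le_mul_of_nonneg_left (pow_rowsum_le hc hA hrowA n i) (by positivity)
  have hEQ : ∀ i j, 0 ≤ NormedSpace.exp Q i j := by
    intro i j
    rw [hsplit]
    simp only [Matrix.smul_apply, smul_eq_mul]
    exact mul_nonneg (Real.exp_nonneg _) (hEA i j)
  have hEQrow : ∀ i, ∑ j, NormedSpace.exp Q i j ≤ 1 := by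
    intro i
    rw [hsplit]
    simp only [Matrix.smul_apply, smul_eq_mul, ← Finset.mul_sum]
    calc Real.exp (-c) * ∑ j, NormedSpace.exp A i j
        ≤ Real.exp (-c) * Real.exp c :=
          mul_le_mul_of_nonneg_left (hEArow i) (Real.exp_nonneg _)
      _ = 1 := by rw [← Real.exp_add]; simp
  refine ⟨hEQ, fun i => ?_, fun i => ⟨Finset.sum_nonneg fun j _ => hEQ i j, hEQrow i⟩⟩
  simpa [Matrix.mulVec, dotProduct] using hEQrow i
end

section
/- If Q is a subgenerator, then ‖e^{tQ}‖_∞ ≤ 1 for all t ≥ 0, where ‖·‖_∞ denotes the matrix norm induced by the vector max-norm (maximum absolute row sum). -/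
attribute [local instance] Matrix.linftyOpNormedAddCommGroup Matrix.linftyOpNormedSpace

section Aux

attribute [local instance] Matrix.linftyOpNormedRing Matrix.linftyOpNormedAlgebra

open NormedSpace

variable {m : ℕ}

lemma aux_row_sum_le_norm (A : Matrix (Fin m) (Fin m) ℝ) (i : Fin m) :
    ∑ j, ‖A i j‖ ≤ ‖A‖ := by
  rw [Matrix.linfty_opNorm_def]
  have : (∑ j, ‖A i j‖₊ : NNReal) ≤ (Finset.univ : Finset (Fin m)).sup
      fun i => ∑ j, ‖A i j‖₊ :=
    Finset.le_sup (f := fun i => ∑ j, ‖A i j‖₊) (Finset.mem_univ i)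
  calc ∑ j, ‖A i j‖ = ((∑ j, ‖A i j‖₊ : NNReal) : ℝ) := by push_cast; rfl
    _ ≤ _ := by exact_mod_cast this

lemma aux_norm_le_of_row_sums (A : Matrix (Fin m) (Fin m) ℝ) (c : ℝ) (hc : 0 ≤ c)
    (h : ∀ i, ∑ j, ‖A i j‖ ≤ c) : ‖A‖ ≤ c := by
  rw [Matrix.linfty_opNorm_def]
  have : ((Finset.univ : Finset (Fin m)).sup fun i => ∑ j, ‖A i j‖₊) ≤ (⟨c, hc⟩ : NNReal) := by
    refine Finset.sup_le fun i _ => ?_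
    refine NNReal.coe_le_coe.mp ?_
    calc ((∑ j, ‖A i j‖₊ : NNReal) : ℝ) = ∑ j, ‖A i j‖ := by push_cast; rfl
      _ ≤ c := h i
  exact_mod_cast this

lemma aux_norm_one_le : ‖(1 : Matrix (Fin m) (Fin m) ℝ)‖ ≤ 1 := by
  refine aux_norm_le_of_row_sums _ 1 zero_le_one fun i => ?_
  have : ∀ j, ‖(1 : Matrix (Fin m) (Fin m) ℝ) i j‖ = if i = j then 1 else 0 := by
    intro j
    by_cases h : i = j <;> simp [Matrix.one_apply, h]
  simp [this]

lemma aux_norm_exp_le (A : Matrix (Fin m) (Fin m) ℝ) :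
    ‖NormedSpace.exp A‖ ≤ Real.exp ‖A‖ := by
  rw [NormedSpace.exp_eq_tsum ℝ, Real.exp_eq_exp_ℝ, NormedSpace.exp_eq_tsum ℝ]
  show ‖∑' n : ℕ, (n.factorial : ℝ)⁻¹ • A ^ n‖ ≤ ∑' n : ℕ, (n.factorial : ℝ)⁻¹ • ‖A‖ ^ n
  have hbound : ∀ n : ℕ, ‖(n.factorial : ℝ)⁻¹ • A ^ n‖ ≤ (n.factorial : ℝ)⁻¹ • ‖A‖ ^ n := by
    intro n
    rw [norm_smul, smul_eq_mul]
    have h1 : ‖((n.factorial : ℝ))⁻¹‖ = ((n.factorial : ℝ))⁻¹ := by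
      rw [Real.norm_eq_abs, abs_of_nonneg]; positivity
    rw [h1]
    refine mul_le_mul_of_nonneg_left ?_ (by positivity)
    cases n with
    | zero => rw [pow_zero, pow_zero]; exact aux_norm_one_le
    | succ k => exact norm_pow_le' A k.succ_pos
  have hs2 : Summable fun n : ℕ => (n.factorial : ℝ)⁻¹ • ‖A‖ ^ n := by
    simpa [div_eq_inv_mul, smul_eq_mul] using Real.summable_pow_div_factorial ‖A‖
  have hs1 : Summable fun n : ℕ => ‖(n.factorial : ℝ)⁻¹ • A ^ n‖ :=
    NormedSpace.norm_expSeries_summable' A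
  calc ‖∑' n : ℕ, (n.factorial : ℝ)⁻¹ • A ^ n‖ ≤ ∑' n : ℕ, ‖(n.factorial : ℝ)⁻¹ • A ^ n‖ :=
        norm_tsum_le_tsum_norm hs1
    _ ≤ ∑' n : ℕ, (n.factorial : ℝ)⁻¹ • ‖A‖ ^ n := Summable.tsum_le_tsum hbound hs1 hs2

end Aux

/-- If `Q` is a subgenerator, then `‖e^{tQ}‖_∞ ≤ 1` for all `t ≥ 0`, where `‖·‖_∞` is
the matrix norm induced by the vector max-norm (maximum absolute row sum), i.e. the
`L∞` operator norm. -/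
theorem exp_smul_subgenerator_norm_le_one {m : ℕ} (Q : Matrix (Fin m) (Fin m) ℝ)
    (hQ : IsSubgenerator Q) :
    ∀ t : ℝ, 0 ≤ t → ‖NormedSpace.exp (t • Q)‖ ≤ 1 := by
  letI : NormedRing (Matrix (Fin m) (Fin m) ℝ) := Matrix.linftyOpNormedRing
  letI : NormedAlgebra ℝ (Matrix (Fin m) (Fin m) ℝ) := Matrix.linftyOpNormedAlgebra
  intro t ht
  obtain ⟨hoff, hrow⟩ := hQ
  set c : ℝ := ‖Q‖ with hc
  have hc0 : 0 ≤ c := norm_nonneg _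
  set R : Matrix (Fin m) (Fin m) ℝ := Q + c • 1 with hR
  -- entries of R are nonnegative
  have hRpos : ∀ i j, 0 ≤ R i j := by
    intro i j
    by_cases h : i = j
    · subst h
      have h1 : ‖Q i i‖ ≤ ∑ j, ‖Q i j‖ :=
        Finset.single_le_sum (fun j _ => norm_nonneg _) (Finset.mem_univ i)
      have h2 : ∑ j, ‖Q i j‖ ≤ c := aux_row_sum_le_norm Q i
      have h3 : -c ≤ Q i i := by
        have := neg_abs_le (Q i i)
        rw [Real.norm_eq_abs] at h1
        linarith
      simp only [hR, Matrix.add_apply, Matrix.smul_apply, Matrix.one_apply_eq, smul_eq_mul,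
        mul_one]
      linarith
    · simpa [hR, Matrix.one_apply, h] using hoff i j h
  -- norm of R is at most c
  have hRnorm : ‖R‖ ≤ c := by
    refine aux_norm_le_of_row_sums R c hc0 fun i => ?_
    have h1 : ∀ j, ‖R i j‖ = R i j := fun j => by
      rw [Real.norm_eq_abs, abs_of_nonneg (hRpos i j)]
    calc ∑ j, ‖R i j‖ = ∑ j, R i j := by simp [h1]
      _ = (∑ j, Q i j) + c := by
          simp [hR, Finset.sum_add_distrib, Matrix.one_apply, smul_eq_mul]
      _ ≤ c := by linarith [hrow i]
  -- decomposition
  have hdecomp : t • Q = t • R + (-(t * c)) • (1 : Matrix (Fin m) (Fin m) ℝ) := by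
    rw [hR]
    rw [smul_add, smul_smul]
    module
  have hcomm : Commute (t • R) ((-(t * c)) • (1 : Matrix (Fin m) (Fin m) ℝ)) :=
    ((Commute.one_right (t • R)).smul_right _)
  have hexp : NormedSpace.exp (t • Q) =
      NormedSpace.exp (t • R) * NormedSpace.exp ((-(t * c)) • 1) := by
    let +nondep : NormedAlgebra ℚ (Matrix (Fin m) (Fin m) ℝ) := .restrictScalars ℚ ℝ _
    rw [hdecomp]; exact NormedSpace.exp_add_of_commute hcomm
  have hexp1 : NormedSpace.exp ((-(t * c)) • (1 : Matrix (Fin m) (Fin m) ℝ)) =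
      Real.exp (-(t * c)) • 1 := by
    have h1 : ((-(t * c)) • (1 : Matrix (Fin m) (Fin m) ℝ)) =
        algebraMap ℝ (Matrix (Fin m) (Fin m) ℝ) (-(t * c)) := by
      rw [Algebra.algebraMap_eq_smul_one]
    rw [h1]
    refine (NormedSpace.algebraMap_exp_comm (𝕂 := ℝ) (𝔸 := Matrix (Fin m) (Fin m) ℝ) _).symm.trans ?_
    rw [Algebra.algebraMap_eq_smul_one,
      ← Real.exp_eq_exp_ℝ]
  have h2 : ‖NormedSpace.exp (t • R)‖ ≤ Real.exp (t * c) := by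
    refine (aux_norm_exp_le _).trans ?_
    apply Real.exp_le_exp.2
    calc ‖t • R‖ = |t| * ‖R‖ := by rw [norm_smul, Real.norm_eq_abs]
      _ = t * ‖R‖ := by rw [abs_of_nonneg ht]
      _ ≤ t * c := mul_le_mul_of_nonneg_left hRnorm ht
  have h3 : ‖(Real.exp (-(t * c))) • (1 : Matrix (Fin m) (Fin m) ℝ)‖ ≤ Real.exp (-(t * c)) := by
    rw [norm_smul, Real.norm_eq_abs, abs_of_pos (Real.exp_pos _)]
    calc Real.exp (-(t * c)) * ‖(1 : Matrix (Fin m) (Fin m) ℝ)‖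
        ≤ Real.exp (-(t * c)) * 1 :=
          mul_le_mul_of_nonneg_left aux_norm_one_le (Real.exp_pos _).le
      _ = _ := mul_one _
  calc ‖NormedSpace.exp (t • Q)‖
      ≤ ‖NormedSpace.exp (t • R)‖ *
          ‖NormedSpace.exp ((-(t * c)) • (1 : Matrix (Fin m) (Fin m) ℝ))‖ := by
        rw [hexp]; exact norm_mul_le _ _
    _ ≤ Real.exp (t * c) * Real.exp (-(t * c)) := by
        rw [hexp1]
        exact mul_le_mul h2 h3 (norm_nonneg _) (Real.exp_pos _).le
    _ = 1 := by rw [← Real.exp_add]; simp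
end

section
/- Let X be a subgenerator and E a real matrix. Define G^{[0]}(tX,E) = e^{tX} and G^{[j]}(tX,E) = j ∫_0^t e^{(t−s)X} E G^{[j−1]}(sX,E) ds for j ≥ 1. Then ‖G^{[j]}(tX,E)‖_∞ ≤ t^j ‖E‖_∞^j for all j ≥ 0 and t ≥ 0. -/
attribute [local instance] Matrix.linftyOpNormedAddCommGroup Matrix.linftyOpNormedSpace

section AuxLemmas

attribute [local instance] Matrix.linftyOpNormedRing Matrix.linftyOpNormedAlgebra

private lemma rowSum_le_norm {k : Type*} [Fintype k] (A : Matrix k k ℝ) (i : k) :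
    ∑ j, |A i j| ≤ ‖A‖ := by
  rw [Matrix.linfty_opNorm_def]
  have h2 : (∑ j, ‖A i j‖₊) ≤ (Finset.univ.sup fun i => ∑ j, ‖A i j‖₊) :=
    Finset.le_sup (f := fun i => ∑ j, ‖A i j‖₊) (Finset.mem_univ i)
  calc ∑ j, |A i j| = ((∑ j, ‖A i j‖₊ : NNReal) : ℝ) := by
        push_cast; simp [Real.norm_eq_abs]
    _ ≤ _ := by exact_mod_cast h2

private lemma norm_le_of_rowSum_le {k : Type*} [Fintype k] (A : Matrix k k ℝ) {r : ℝ}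
    (hr : 0 ≤ r) (h : ∀ i, ∑ j, |A i j| ≤ r) : ‖A‖ ≤ r := by
  rw [Matrix.linfty_opNorm_def]
  have : (Finset.univ.sup fun i => ∑ j, ‖A i j‖₊) ≤ (⟨r, hr⟩ : NNReal) := by
    refine Finset.sup_le fun i _ => ?_
    refine NNReal.coe_le_coe.mp ?_
    push_cast
    exact (by simpa [Real.norm_eq_abs] using h i : _ ≤ r)
  exact_mod_cast this

open NormedSpace in
private lemma norm_exp_le_exp_norm_matrix {n : ℕ} [NeZero n] (A : Matrix (Fin n) (Fin n) ℝ) :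
    ‖exp A‖ ≤ Real.exp ‖A‖ := by
  have h0 : exp A = ∑' k : ℕ, (((Nat.factorial k) : ℝ)⁻¹) • A ^ k := by rw [exp_eq_tsum ℝ]
  have hsum := NormedSpace.norm_expSeries_summable' (𝕂 := ℝ) A
  have hterm : ∀ k : ℕ, ‖(((Nat.factorial k) : ℝ)⁻¹) • A ^ k‖ ≤ ‖A‖ ^ k / ((Nat.factorial k) : ℝ) := by
    intro k
    rw [norm_smul, Real.norm_eq_abs, abs_of_nonneg (by positivity), div_eq_inv_mul]
    gcongr
    exact norm_pow_le A k
  calc ‖exp A‖ ≤ ∑' k : ℕ, ‖(((Nat.factorial k) : ℝ)⁻¹) • A ^ k‖ := h0 ▸ norm_tsum_le_tsum_norm hsum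
    _ ≤ ∑' k : ℕ, ‖A‖ ^ k / ((Nat.factorial k) : ℝ) :=
        Summable.tsum_le_tsum hterm hsum (Real.summable_pow_div_factorial ‖A‖)
    _ = Real.exp ‖A‖ := by
        rw [Real.exp_eq_exp_ℝ, exp_eq_tsum_div]

open NormedSpace in
private lemma norm_exp_smul_le_one {n : ℕ} (X : Matrix (Fin n) (Fin n) ℝ)
    (hX : IsSubgenerator X) {s : ℝ} (hs : 0 ≤ s) :
    ‖exp (s • X)‖ ≤ 1 := by
  rcases Nat.eq_zero_or_pos n with rfl | hn
  · rw [Subsingleton.elim (exp (s • X)) 0, norm_zero]; norm_num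
  haveI : NeZero n := ⟨hn.ne'⟩
  set l : ℝ := ‖X‖ with hl
  have hl0 : 0 ≤ l := norm_nonneg X
  have hd : ∀ i, -X i i ≤ l := by
    intro i
    have h1 : |X i i| ≤ ∑ j, |X i j| :=
      Finset.single_le_sum (f := fun j => |X i j|) (fun j _ => abs_nonneg _) (Finset.mem_univ i)
    have h2 := h1.trans (rowSum_le_norm X i)
    have := neg_abs_le (X i i)
    linarith
  have hB : ‖X + l • (1 : Matrix (Fin n) (Fin n) ℝ)‖ ≤ l := by
    refine norm_le_of_rowSum_le _ hl0 fun i => ?_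
    have hnn : ∀ j, 0 ≤ (X + l • (1 : Matrix (Fin n) (Fin n) ℝ)) i j := by
      intro j
      by_cases hij : i = j
      · subst hij
        simp only [Matrix.add_apply, Matrix.smul_apply, Matrix.one_apply_eq, smul_eq_mul, mul_one]
        linarith [hd i]
      · simpa only [Matrix.add_apply, Matrix.smul_apply, Matrix.one_apply_ne hij, smul_eq_mul,
          mul_zero, add_zero] using hX.1 i j hij
    calc ∑ j, |(X + l • (1 : Matrix (Fin n) (Fin n) ℝ)) i j|
        = ∑ j, (X + l • (1 : Matrix (Fin n) (Fin n) ℝ)) i j :=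
          Finset.sum_congr rfl fun j _ => abs_of_nonneg (hnn j)
      _ = (∑ j, X i j) + l := by
          simp [Matrix.add_apply, Matrix.smul_apply, Matrix.one_apply, Finset.sum_add_distrib,
            Finset.sum_ite_eq' (Finset.univ : Finset (Fin n))]
      _ ≤ l := by linarith [hX.2 i]
  have hsplit : s • X = (-(s * l)) • (1 : Matrix (Fin n) (Fin n) ℝ) + s • (X + l • 1) := by
    module
  have hcomm : Commute ((-(s * l)) • (1 : Matrix (Fin n) (Fin n) ℝ)) (s • (X + l • 1)) :=
    ((Commute.one_left _).smul_left _).smul_right _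
  have h1 : exp ((-(s * l)) • (1 : Matrix (Fin n) (Fin n) ℝ)) =
      Real.exp (-(s * l)) • (1 : Matrix (Fin n) (Fin n) ℝ) := by
    erw [← Algebra.algebraMap_eq_smul_one, ← NormedSpace.algebraMap_exp_comm,
      Algebra.algebraMap_eq_smul_one, Real.exp_eq_exp_ℝ]
  calc ‖exp (s • X)‖
      = ‖exp ((-(s * l)) • (1 : Matrix (Fin n) (Fin n) ℝ)) * exp (s • (X + l • 1))‖ := by
        rw [hsplit, Matrix.exp_add_of_commute _ _ hcomm]
    _ ≤ ‖exp ((-(s * l)) • (1 : Matrix (Fin n) (Fin n) ℝ))‖ * ‖exp (s • (X + l • 1))‖ :=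
        norm_mul_le _ _
    _ ≤ Real.exp (-(s * l)) * Real.exp (s * l) := by
        refine mul_le_mul ?_ ?_ (norm_nonneg _) (Real.exp_nonneg _)
        · rw [h1, norm_smul, Real.norm_eq_abs, abs_of_nonneg (Real.exp_nonneg _), norm_one,
            mul_one]
        · refine (norm_exp_le_exp_norm_matrix _).trans ?_
          refine Real.exp_le_exp.mpr ?_
          rw [norm_smul, Real.norm_eq_abs, abs_of_nonneg hs]
          exact mul_le_mul_of_nonneg_left hB hs
    _ = 1 := by rw [← Real.exp_add]; simp

end AuxLemmas

/-- Let `X` be a subgenerator and `E` a real matrix.  If `G j t` denotes the `j`-th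
Gâteaux derivative `G^{[j]}(tX,E)`, defined by `G 0 t = e^{tX}` and
`G j t = j ∫_0^t e^{(t−s)X} E (G (j-1) s) ds` for `j ≥ 1`, then
`‖G j t‖_∞ ≤ t^j ‖E‖_∞^j` for all `j ≥ 0`, `t ≥ 0`. -/
theorem gateaux_deriv_iter_exp_norm_le {m : ℕ} (X E : Matrix (Fin m) (Fin m) ℝ)
    (hX : IsSubgenerator X)
    (G : ℕ → ℝ → Matrix (Fin m) (Fin m) ℝ)
    (hG0 : ∀ t : ℝ, G 0 t = NormedSpace.exp (t • X))
    (hGsucc : ∀ (j : ℕ) (t : ℝ), G (j + 1) t =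
      ((j : ℝ) + 1) • ∫ s in (0:ℝ)..t,
        NormedSpace.exp ((t - s) • X) * E * G j s) :
    ∀ (j : ℕ) (t : ℝ), 0 ≤ t → ‖G j t‖ ≤ t ^ j * ‖E‖ ^ j := by
  letI := Matrix.linftyOpNormedRing (α := ℝ) (n := Fin m)
  intro j
  induction j with
  | zero =>
    intro t ht
    rw [hG0, pow_zero, pow_zero, mul_one]
    exact norm_exp_smul_le_one X hX ht
  | succ j ih =>
    intro t ht
    rw [hGsucc]
    set f : ℝ → Matrix (Fin m) (Fin m) ℝ :=
      fun s => NormedSpace.exp ((t - s) • X) * E * G j s with hf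
    by_cases hInt : @IntervalIntegrable _ PseudoMetricSpace.toUniformSpace.toTopologicalSpace NormedAddGroup.toENormedAddMonoid f MeasureTheory.volume 0 t
    · have hbound : ∀ s ∈ Set.Icc (0:ℝ) t, ‖f s‖ ≤ ‖E‖ ^ (j + 1) * s ^ j := by
        intro s hs
        calc ‖f s‖ ≤ ‖NormedSpace.exp ((t - s) • X)‖ * ‖E‖ * ‖G j s‖ :=
              le_trans (norm_mul_le _ _)
                (mul_le_mul_of_nonneg_right (norm_mul_le _ _) (norm_nonneg _))
          _ ≤ 1 * ‖E‖ * (s ^ j * ‖E‖ ^ j) :=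
              mul_le_mul
                (mul_le_mul (norm_exp_smul_le_one X hX (sub_nonneg.mpr hs.2)) le_rfl
                  (norm_nonneg E) zero_le_one)
                (ih s hs.1) (norm_nonneg _) (by positivity)
          _ = ‖E‖ ^ (j + 1) * s ^ j := by ring
      have hIntBound : IntervalIntegrable (fun s => ‖E‖ ^ (j + 1) * s ^ j)
          MeasureTheory.volume 0 t := (by fun_prop : Continuous fun s : ℝ => ‖E‖ ^ (j + 1) * s ^ j).intervalIntegrable 0 t
      have h2 : ‖∫ s in (0:ℝ)..t, f s‖ ≤ ∫ s in (0:ℝ)..t, ‖f s‖ :=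
        intervalIntegral.norm_integral_le_integral_norm ht
      have h3 : (∫ s in (0:ℝ)..t, ‖f s‖) ≤ ∫ s in (0:ℝ)..t, ‖E‖ ^ (j + 1) * s ^ j :=
        intervalIntegral.integral_mono_on ht hInt.norm hIntBound hbound
      have h4 : (∫ s in (0:ℝ)..t, ‖E‖ ^ (j + 1) * s ^ j)
          = ‖E‖ ^ (j + 1) * (t ^ (j + 1) / ((j : ℝ) + 1)) := by
        rw [intervalIntegral.integral_const_mul, integral_pow]
        ring_nf
      rw [norm_smul, Real.norm_eq_abs, abs_of_nonneg (by positivity : (0:ℝ) ≤ (j:ℝ) + 1)]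
      have hj : ((j : ℝ) + 1) ≠ 0 := by positivity
      calc ((j : ℝ) + 1) * ‖∫ s in (0:ℝ)..t, f s‖
          ≤ ((j : ℝ) + 1) * (‖E‖ ^ (j + 1) * (t ^ (j + 1) / ((j : ℝ) + 1))) := by
            rw [← h4]
            exact mul_le_mul_of_nonneg_left (h2.trans h3) (by positivity)
        _ = t ^ (j + 1) * ‖E‖ ^ (j + 1) := by field_simp
    · rw [intervalIntegral.integral_undef hInt, smul_zero, norm_zero]
      positivity
end

section
/- Let X be a subgenerator and E ≥ 0 an entrywise nonnegative matrix. Then every higher-order Gâteaux derivative G^{[j]}(tX,E) of the matrix exponential along E is entrywise nonnegative for all t ≥ 0 and j ≥ 0. -/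
attribute [local instance] Matrix.linftyOpNormedAddCommGroup Matrix.linftyOpNormedSpace

attribute [local instance] Matrix.linftyOpNormedRing Matrix.linftyOpNormedAlgebra

namespace GateauxAux

variable {m : ℕ}

/-- Entry evaluation as a continuous linear map. -/
noncomputable def entryCLM (p q : Fin m) : Matrix (Fin m) (Fin m) ℝ →L[ℝ] ℝ :=
  LinearMap.toContinuousLinearMap
    { toFun := fun A => A p q
      map_add' := fun _ _ => rfl
      map_smul' := fun _ _ => rfl }

@[simp] lemma entryCLM_apply (p q : Fin m) (A : Matrix (Fin m) (Fin m) ℝ) :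
    entryCLM p q A = A p q := rfl

lemma mul_entry_nonneg {A B : Matrix (Fin m) (Fin m) ℝ}
    (hA : ∀ i j, 0 ≤ A i j) (hB : ∀ i j, 0 ≤ B i j) : ∀ i j, 0 ≤ (A * B) i j := by
  intro i j
  rw [Matrix.mul_apply]
  exact Finset.sum_nonneg fun k _ => mul_nonneg (hA i k) (hB k j)

lemma pow_entry_nonneg {A : Matrix (Fin m) (Fin m) ℝ}
    (hA : ∀ i j, 0 ≤ A i j) (n : ℕ) : ∀ i j, 0 ≤ (A ^ n) i j := by
  induction n with
  | zero =>
    intro i j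
    simp only [pow_zero]
    by_cases h : i = j <;> simp [Matrix.one_apply, h]
  | succ n ih =>
    rw [pow_succ]
    exact mul_entry_nonneg ih hA

lemma exp_entry_nonneg_of_nonneg {A : Matrix (Fin m) (Fin m) ℝ}
    (hA : ∀ i j, 0 ≤ A i j) : ∀ p q, 0 ≤ NormedSpace.exp A p q := by
  intro p q
  have hsum : Summable fun n : ℕ => ((Nat.factorial n : ℝ))⁻¹ • A ^ n :=
    NormedSpace.expSeries_summable' A
  have key : (∑' n : ℕ, ((Nat.factorial n : ℝ))⁻¹ • A ^ n) p q
      = ∑' n : ℕ, (((Nat.factorial n : ℝ))⁻¹ • A ^ n) p q := (entryCLM p q).map_tsum hsum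
  simp only [NormedSpace.exp_eq_tsum ℝ]
  rw [key]
  refine tsum_nonneg fun n => ?_
  simp only [Matrix.smul_apply, smul_eq_mul]
  exact mul_nonneg (by positivity) (pow_entry_nonneg hA n p q)

lemma exp_entry_nonneg_of_offdiag {A : Matrix (Fin m) (Fin m) ℝ}
    (hA : ∀ i j, i ≠ j → 0 ≤ A i j) : ∀ p q, 0 ≤ NormedSpace.exp A p q := by
  intro p q
  set c : ℝ := ∑ i, |A i i| with hc
  have hc0 : ∀ i, |A i i| ≤ c :=
    fun i => Finset.single_le_sum (fun j _ => abs_nonneg (A j j)) (Finset.mem_univ i)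
  set B : Matrix (Fin m) (Fin m) ℝ := A + c • (1 : Matrix (Fin m) (Fin m) ℝ) with hB
  have hBnn : ∀ i j, 0 ≤ B i j := by
    intro i j
    by_cases h : i = j
    · subst h
      simp only [hB, Matrix.add_apply, Matrix.smul_apply, Matrix.one_apply_eq, smul_eq_mul,
        mul_one]
      have := hc0 i
      have := neg_abs_le (A i i)
      linarith
    · simp only [hB, Matrix.add_apply, Matrix.smul_apply, Matrix.one_apply_ne h, smul_eq_mul,
        mul_zero, add_zero]
      exact hA i j h
  have hcomm : Commute B ((-c) • (1 : Matrix (Fin m) (Fin m) ℝ)) :=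
    ((Commute.one_right B).smul_right (-c))
  have hsplit : A = B + (-c) • (1 : Matrix (Fin m) (Fin m) ℝ) := by
    simp [hB, add_assoc, ← add_smul]
  have hexp : NormedSpace.exp A
      = NormedSpace.exp B * NormedSpace.exp ((-c) • (1 : Matrix (Fin m) (Fin m) ℝ)) := by
    rw [hsplit]
    exact Matrix.exp_add_of_commute B _ hcomm
  have hdiag : ((-c) • (1 : Matrix (Fin m) (Fin m) ℝ))
      = Matrix.diagonal (fun _ => -c) := by
    ext i j
    by_cases h : i = j <;> simp [Matrix.one_apply, Matrix.diagonal_apply, h]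
  have hscal : NormedSpace.exp ((-c) • (1 : Matrix (Fin m) (Fin m) ℝ))
      = Matrix.diagonal (fun _ : Fin m => Real.exp (-c)) := by
    rw [hdiag, Matrix.exp_diagonal, Pi.exp_def]
    have h1 : NormedSpace.exp (-c) = Real.exp (-c) := (congrFun Real.exp_eq_exp_ℝ (-c)).symm
    simp only [h1]
  rw [hexp, hscal, Matrix.mul_diagonal]
  exact mul_nonneg (exp_entry_nonneg_of_nonneg hBnn p q) (Real.exp_pos _).le

end GateauxAux

open GateauxAux in
/-- Let `X` be a subgenerator and `E ≥ 0` an entrywise nonnegative matrix.  Then every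
higher-order Gâteaux derivative `G^{[j]}(tX,E)` of the matrix exponential along `E`,
defined by `G 0 t = e^{tX}` and `G j t = j ∫_0^t e^{(t−s)X} E (G (j-1) s) ds`,
is entrywise nonnegative for all `t ≥ 0` and `j ≥ 0`. -/
theorem gateaux_deriv_iter_exp_nonneg {m : ℕ} (X E : Matrix (Fin m) (Fin m) ℝ)
    (hX : IsSubgenerator X) (hE : ∀ i j, 0 ≤ E i j)
    (G : ℕ → ℝ → Matrix (Fin m) (Fin m) ℝ)
    (hG0 : ∀ t : ℝ, G 0 t = NormedSpace.exp (t • X))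
    (hGsucc : ∀ (j : ℕ) (t : ℝ), G (j + 1) t =
      ((j : ℝ) + 1) • ∫ s in (0:ℝ)..t,
        NormedSpace.exp ((t - s) • X) * E * G j s) :
    ∀ (j : ℕ) (t : ℝ), 0 ≤ t → ∀ p q, 0 ≤ G j t p q := by
  have hexpX : ∀ r : ℝ, 0 ≤ r → ∀ p q, 0 ≤ NormedSpace.exp (r • X) p q := by
    intro r hr
    refine exp_entry_nonneg_of_offdiag fun i j hij => ?_
    simp only [Matrix.smul_apply, smul_eq_mul]
    exact mul_nonneg hr (hX.1 i j hij)
  intro j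
  induction j with
  | zero =>
    intro t ht p q
    rw [hG0]
    exact hexpX t ht p q
  | succ j ih =>
    intro t ht p q
    rw [hGsucc]
    rw [Matrix.smul_apply, smul_eq_mul]
    refine mul_nonneg (by positivity) ?_
    set f : ℝ → Matrix (Fin m) (Fin m) ℝ :=
      fun s => NormedSpace.exp ((t - s) • X) * E * G j s with hf
    by_cases hint : @IntervalIntegrable _ _ (NormedAddCommGroup.toENormedAddCommMonoid.toENormedAddMonoid) f MeasureTheory.volume 0 t
    · have hcomm := (entryCLM p q).intervalIntegral_comp_comm hint
      have : (∫ s in (0:ℝ)..t, f s) p q = ∫ s in (0:ℝ)..t, f s p q := hcomm.symm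
      rw [this]
      refine intervalIntegral.integral_nonneg ht fun s hs => ?_
      have hs0 : 0 ≤ s := hs.1
      have hst : 0 ≤ t - s := by linarith [hs.2]
      exact mul_entry_nonneg
        (mul_entry_nonneg (hexpX (t - s) hst) hE) (ih s hs0) p q
    · rw [intervalIntegral.integral_undef hint]
      simp
end

section
/- The exponential of a block ε-circulant matrix is block ε-circulant: e^{C_ε(U)} = C_ε(Y) where Y = (1/n) D_ε^{-1} (F⊗I_m) W, W_i = e^{V_i}, and V = (F⊗I_m)^H D_ε U. -/
/-- The `n×n` Fourier matrix `F = (ω^{ij})` with `ω = e^{2πi/n}`. -/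
noncomputable def fourierMatrix (n : ℕ) : Matrix (Fin n) (Fin n) ℂ := fun i j =>
  Complex.exp (2 * Real.pi * Complex.I * (i : ℕ) * (j : ℕ) / n)

/-- The block ε-circulant matrix with first block row `[U 0, …, U (n-1)]`. -/
def epsBlockCirculant {n m : ℕ} (ε : ℂ) (U : Fin n → Matrix (Fin m) (Fin m) ℂ) :
    Matrix (Fin n × Fin m) (Fin n × Fin m) ℂ := fun p q =>
  if h : (p.1 : ℕ) ≤ (q.1 : ℕ) then
    U ⟨(q.1 : ℕ) - (p.1 : ℕ), by have := q.1.isLt; omega⟩ p.2 q.2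
  else
    ε * U ⟨n + (q.1 : ℕ) - (p.1 : ℕ), by have := p.1.isLt; omega⟩ p.2 q.2

noncomputable def eK (n : ℕ) (c : ℤ) : ℂ := Complex.exp (2 * Real.pi * Complex.I * c / n)

lemma eK_add (n : ℕ) (a b : ℤ) : eK n (a + b) = eK n a * eK n b := by
  rw [eK, eK, eK, ← Complex.exp_add]
  congr 1
  push_cast
  ring

lemma eK_nat_mul (n : ℕ) (hn : n ≠ 0) (k : ℤ) : eK n ((n : ℤ) * k) = 1 := by
  rw [eK, Complex.exp_eq_one_iff]
  refine ⟨k, ?_⟩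
  have : (n : ℂ) ≠ 0 := Nat.cast_ne_zero.mpr hn
  field_simp
  push_cast
  ring

lemma eK_pow (n : ℕ) (c : ℤ) (k : ℕ) : eK n c ^ k = eK n (c * k) := by
  rw [eK, eK, ← Complex.exp_nat_mul]
  congr 1
  push_cast
  ring

lemma conj_eK (n : ℕ) (c : ℤ) : (starRingEnd ℂ) (eK n c) = eK n (-c) := by
  rw [eK, eK, ← Complex.exp_conj]
  congr 1
  simp [map_div₀, Complex.conj_I, map_ofNat]

lemma fourier_eK (n : ℕ) (i j : Fin n) :
    fourierMatrix n i j = eK n ((i : ℤ) * (j : ℤ)) := by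
  rw [fourierMatrix, eK]
  congr 1
  push_cast
  ring

lemma eK_sum (n : ℕ) (hn : n ≠ 0) (c : ℤ) :
    ∑ j : Fin n, eK n (c * (j : ℤ)) = if (n : ℤ) ∣ c then (n : ℂ) else 0 := by
  have hpow : ∀ j : Fin n, eK n (c * (j : ℤ)) = eK n c ^ (j : ℕ) := fun j => by
    rw [eK_pow]
  simp_rw [hpow]
  by_cases h : (n : ℤ) ∣ c
  · obtain ⟨k, rfl⟩ := h
    simp [eK_nat_mul n hn k, if_pos, dvd_mul_right]
  · have hne : eK n c ≠ 1 := by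
      intro hc
      rw [eK, Complex.exp_eq_one_iff] at hc
      obtain ⟨k, hk⟩ := hc
      apply h
      have hC : (n : ℂ) ≠ 0 := Nat.cast_ne_zero.mpr hn
      have h2 : (2 * Real.pi * Complex.I : ℂ) ≠ 0 := by
        simp [Real.pi_ne_zero, Complex.I_ne_zero]
      have hc2 : (2 * Real.pi * Complex.I : ℂ) * c = (2 * Real.pi * Complex.I) * (k * n) := by
        field_simp at hk
        rw [hk]; ring
      have hc3 : (c : ℂ) = (k : ℂ) * n := mul_left_cancel₀ h2 hc2
      have hc4 : c = k * n := by exact_mod_cast hc3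
      exact ⟨k, by rw [hc4, mul_comm]⟩
    rw [if_neg h, Fin.sum_univ_eq_sum_range (fun i => eK n c ^ i) n, geom_sum_eq hne,
      eK_pow, mul_comm c, eK_nat_mul n hn c]
    simp

open Matrix

lemma fin_dvd_iff (n : ℕ) (i q : Fin n) : (n : ℤ) ∣ ((q : ℤ) - (i : ℤ)) ↔ i = q := by
  constructor
  · rintro ⟨k, hk⟩
    have hn' : (0:ℤ) < n := by exact_mod_cast i.pos
    have hi0 : (0:ℤ) ≤ (i : ℤ) := Int.natCast_nonneg _
    have hq0 : (0:ℤ) ≤ (q : ℤ) := Int.natCast_nonneg _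
    have hi' : (i : ℤ) < n := by exact_mod_cast i.isLt
    have hq' : (q : ℤ) < n := by exact_mod_cast q.isLt
    have hk0 : k = 0 := by
      by_contra hk0
      rcases lt_or_gt_of_ne hk0 with h | h
      · have := mul_le_mul_of_nonneg_left (show k ≤ -1 by omega) (le_of_lt hn')
        linarith
      · have := mul_le_mul_of_nonneg_left (show (1:ℤ) ≤ k by omega) (le_of_lt hn')
        linarith
    subst hk0
    have : (i : ℕ) = (q : ℕ) := by omega
    exact Fin.ext this
  · rintro rfl; simp

noncomputable def pM (n m : ℕ) (θ : ℂ) : Matrix (Fin n × Fin m) (Fin n × Fin m) ℂ :=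
  fun p q => if p.2 = q.2 then θ ^ (p.1 : ℕ) * eK n (-((p.1 : ℤ) * (q.1 : ℤ))) else 0

noncomputable def qM (n m : ℕ) (θ : ℂ) : Matrix (Fin n × Fin m) (Fin n × Fin m) ℂ :=
  fun p q => if p.2 = q.2 then (n : ℂ)⁻¹ * eK n ((p.1 : ℤ) * (q.1 : ℤ)) * (θ ^ (q.1 : ℕ))⁻¹ else 0

def bD {n m : ℕ} (V : Fin n → Matrix (Fin m) (Fin m) ℂ) :
    Matrix (Fin n × Fin m) (Fin n × Fin m) ℂ :=
  fun p q => if p.1 = q.1 then V p.1 p.2 q.2 else 0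

lemma hPQ {n m : ℕ} (hn : n ≠ 0) (θ : ℂ) (hθ : θ ≠ 0) : pM n m θ * qM n m θ = 1 := by
  ext ⟨i, a⟩ ⟨q, c⟩
  rw [Matrix.mul_apply, Fintype.sum_prod_type]
  simp only [pM, qM, ite_mul, zero_mul, mul_ite, mul_zero, Finset.sum_ite_eq,
    Finset.mem_univ, if_true, Matrix.one_apply, Prod.mk.injEq, Finset.sum_ite_eq',
    Finset.sum_ite_eq]
  by_cases hac : a = c
  · subst hac
    simp only [if_pos rfl, and_true]
    have hterm : ∀ x : Fin n, θ ^ (i:ℕ) * eK n (-((i:ℤ) * (x:ℤ))) *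
        ((n:ℂ)⁻¹ * eK n ((x:ℤ) * (q:ℤ)) * (θ ^ (q:ℕ))⁻¹)
        = (θ ^ (i:ℕ) * (n:ℂ)⁻¹ * (θ ^ (q:ℕ))⁻¹) * eK n (((q:ℤ) - (i:ℤ)) * (x:ℤ)) := by
      intro x
      rw [show ((q:ℤ) - (i:ℤ)) * (x:ℤ) = -((i:ℤ) * (x:ℤ)) + (x:ℤ) * (q:ℤ) by ring, eK_add]
      ring
    simp_rw [hterm]
    simp only [if_true]
    rw [← Finset.mul_sum, eK_sum n hn]
    simp only [fin_dvd_iff]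
    by_cases hiq : i = q
    · subst hiq
      have hn' : (n : ℂ) ≠ 0 := Nat.cast_ne_zero.mpr hn
      have hθi : θ ^ (i:ℕ) ≠ 0 := pow_ne_zero _ hθ
      simp only [if_pos rfl]
      field_simp
      simp
    · simp [hiq]
  · simp [hac]

lemma hQP {n m : ℕ} (hn : n ≠ 0) (θ : ℂ) (hθ : θ ≠ 0) : qM n m θ * pM n m θ = 1 := by
  ext ⟨i, a⟩ ⟨q, c⟩
  rw [Matrix.mul_apply, Fintype.sum_prod_type]
  simp only [pM, qM, ite_mul, zero_mul, mul_ite, mul_zero, Finset.sum_ite_eq,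
    Finset.mem_univ, if_true, Matrix.one_apply, Prod.mk.injEq, Finset.sum_ite_eq']
  by_cases hac : a = c
  · subst hac
    simp only [if_pos rfl, and_true, if_true]
    have hθx : ∀ x : Fin n, (θ ^ (x:ℕ))⁻¹ * θ ^ (x:ℕ) = 1 := fun x =>
      inv_mul_cancel₀ (pow_ne_zero _ hθ)
    have hterm : ∀ x : Fin n, (n:ℂ)⁻¹ * eK n ((i:ℤ) * (x:ℤ)) * (θ ^ (x:ℕ))⁻¹ *
        (θ ^ (x:ℕ) * eK n (-((x:ℤ) * (q:ℤ))))
        = (n:ℂ)⁻¹ * eK n (((i:ℤ) - (q:ℤ)) * (x:ℤ)) := by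
      intro x
      rw [show ((i:ℤ) - (q:ℤ)) * (x:ℤ) = (i:ℤ) * (x:ℤ) + -((x:ℤ) * (q:ℤ)) by ring, eK_add,
        show (n:ℂ)⁻¹ * eK n ((i:ℤ)*(x:ℤ)) * (θ ^ (x:ℕ))⁻¹ * (θ ^ (x:ℕ) * eK n (-((x:ℤ)*(q:ℤ))))
          = (n:ℂ)⁻¹ * (eK n ((i:ℤ)*(x:ℤ)) * eK n (-((x:ℤ)*(q:ℤ)))) * ((θ ^ (x:ℕ))⁻¹ * θ ^ (x:ℕ))
          by ring, hθx x]
      ring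
    simp_rw [hterm]
    rw [← Finset.mul_sum, eK_sum n hn]
    simp only [fin_dvd_iff n q i]
    by_cases hiq : q = i
    · subst hiq
      have hn' : (n : ℂ) ≠ 0 := Nat.cast_ne_zero.mpr hn
      simp only [if_pos rfl]
      field_simp
      simp
    · rw [if_neg hiq, if_neg (fun h => hiq h.symm), mul_zero]
  · simp [hac]

lemma core {n m : ℕ} (hn : n ≠ 0) (θ ε : ℂ) (hθ : θ ≠ 0) (hθn : θ ^ n = ε)
    (V : Fin n → Matrix (Fin m) (Fin m) ℂ) :
    pM n m θ * bD V * qM n m θ = epsBlockCirculant ε (fun i =>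
      (θ ^ (i : ℕ))⁻¹ • ((n : ℂ)⁻¹ • ∑ j, fourierMatrix n i j • V j)) := by
  ext ⟨i, a⟩ ⟨q, c⟩
  simp only [Matrix.mul_apply, Fintype.sum_prod_type, pM, qM, bD, ite_mul, zero_mul,
    mul_ite, mul_zero, Finset.sum_ite_eq, Finset.sum_ite_eq', Finset.mem_univ, if_true,
    epsBlockCirculant, Matrix.smul_apply, Matrix.sum_apply, smul_eq_mul,
    Finset.sum_ite_irrel, Finset.sum_const_zero]
  by_cases hle : (i : ℕ) ≤ (q : ℕ)
  · rw [dif_pos hle]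
    rw [Finset.mul_sum, Finset.mul_sum]
    refine Finset.sum_congr rfl fun x _ => ?_
    rw [fourier_eK]
    have hd : ((((q:ℕ) - (i:ℕ) : ℕ)) : ℤ) = (q:ℤ) - (i:ℤ) := by omega
    have e1 : eK n (-((i:ℤ) * (x:ℤ))) * eK n ((x:ℤ) * (q:ℤ))
        = eK n (((q:ℤ) - (i:ℤ)) * (x:ℤ)) := by
      rw [← eK_add]; congr 1; ring
    have hiq : θ ^ (q:ℕ) = θ ^ (i:ℕ) * θ ^ ((q:ℕ) - (i:ℕ)) := by
      rw [← pow_add]; congr 1; omega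
    have e2 : θ ^ (i:ℕ) * (θ ^ (q:ℕ))⁻¹ = (θ ^ ((q:ℕ) - (i:ℕ)))⁻¹ := by
      rw [hiq, mul_inv, ← mul_assoc, mul_inv_cancel₀ (pow_ne_zero _ hθ), one_mul]
    simp only [Fin.val_mk, hd]
    linear_combination ((n:ℂ)⁻¹ * V x a c * (θ ^ (i:ℕ) * (θ ^ (q:ℕ))⁻¹)) * e1 +
      ((n:ℂ)⁻¹ * V x a c * eK n (((q:ℤ) - (i:ℤ)) * (x:ℤ))) * e2
  · rw [dif_neg hle]
    rw [Finset.mul_sum, Finset.mul_sum, Finset.mul_sum]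
    refine Finset.sum_congr rfl fun x _ => ?_
    rw [fourier_eK]
    have hd : (((n + (q:ℕ) - (i:ℕ) : ℕ)) : ℤ) = ((q:ℤ) - (i:ℤ)) + (n:ℤ) := by
      have := i.isLt; omega
    have e1 : eK n (-((i:ℤ) * (x:ℤ))) * eK n ((x:ℤ) * (q:ℤ))
        = eK n (((q:ℤ) - (i:ℤ)) * (x:ℤ)) := by
      rw [← eK_add]; congr 1; ring
    have e3 : eK n ((((q:ℤ) - (i:ℤ)) + (n:ℤ)) * (x:ℤ)) = eK n (((q:ℤ) - (i:ℤ)) * (x:ℤ)) := by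
      rw [show (((q:ℤ) - (i:ℤ)) + (n:ℤ)) * (x:ℤ)
          = ((q:ℤ) - (i:ℤ)) * (x:ℤ) + (n:ℤ) * (x:ℤ) by ring, eK_add,
        eK_nat_mul n hn, mul_one]
    have hpow : θ ^ n * θ ^ (q:ℕ) = θ ^ (i:ℕ) * θ ^ (n + (q:ℕ) - (i:ℕ)) := by
      rw [← pow_add, ← pow_add]; congr 1; have := i.isLt; omega
    have e2 : ε * (θ ^ (n + (q:ℕ) - (i:ℕ)))⁻¹ = θ ^ (i:ℕ) * (θ ^ (q:ℕ))⁻¹ := by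
      rw [← hθn]
      have h1 : θ ^ (q:ℕ) ≠ 0 := pow_ne_zero _ hθ
      have h2 : θ ^ (n + (q:ℕ) - (i:ℕ)) ≠ 0 := pow_ne_zero _ hθ
      field_simp
      linear_combination hpow
    simp only [Fin.val_mk, hd, e3]
    linear_combination ((n:ℂ)⁻¹ * V x a c * (θ ^ (i:ℕ) * (θ ^ (q:ℕ))⁻¹)) * e1 -
      ((n:ℂ)⁻¹ * V x a c * eK n (((q:ℤ) - (i:ℤ)) * (x:ℤ))) * e2

open NormedSpace in
lemma exp_reindex {A B : Type*} [Fintype A] [DecidableEq A] [Fintype B] [DecidableEq B]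
    (e : A ≃ B) (M : Matrix A A ℂ) :
    exp (Matrix.reindex e e M) = Matrix.reindex e e (exp M) := by
  let φ : Matrix A A ℂ ≃L[ℂ] Matrix B B ℂ :=
    { Matrix.reindexLinearEquiv ℂ ℂ e e with
      continuous_toFun := continuous_id.matrix_submatrix _ _
      continuous_invFun := continuous_id.matrix_submatrix _ _ }
  have hφ : ∀ X : Matrix A A ℂ, φ X = Matrix.reindex e e X := fun _ => rfl
  have h1 : ∀ k : ℕ, Matrix.reindex e e (((k.factorial : ℂ))⁻¹ • M ^ k)
      = ((k.factorial : ℂ))⁻¹ • (Matrix.reindex e e M) ^ k := by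
    intro k
    rw [← Matrix.reindexAlgEquiv_apply ℂ ℂ e, _root_.map_smul, map_pow,
      Matrix.reindexAlgEquiv_apply]
  simp only [exp_eq_tsum ℂ]
  calc ∑' k : ℕ, ((k.factorial : ℂ))⁻¹ • (Matrix.reindex e e M) ^ k
      = ∑' k : ℕ, Matrix.reindex e e (((k.factorial : ℂ))⁻¹ • M ^ k) :=
        tsum_congr fun k => (h1 k).symm
    _ = ∑' k : ℕ, φ (((k.factorial : ℂ))⁻¹ • M ^ k) := by simp_rw [hφ]
    _ = φ (∑' k : ℕ, ((k.factorial : ℂ))⁻¹ • M ^ k) := φ.map_tsum.symm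
    _ = Matrix.reindex e e (∑' k : ℕ, ((k.factorial : ℂ))⁻¹ • M ^ k) := hφ _

lemma bD_eq {n m : ℕ} (V : Fin n → Matrix (Fin m) (Fin m) ℂ) :
    bD V = Matrix.reindex (Equiv.prodComm (Fin m) (Fin n)) (Equiv.prodComm (Fin m) (Fin n))
      (Matrix.blockDiagonal V) := by
  ext ⟨i, a⟩ ⟨q, c⟩
  simp only [bD, Matrix.reindex_apply, Matrix.submatrix_apply, Equiv.prodComm_symm,
    Equiv.prodComm_apply, Prod.swap_prod_mk, Matrix.blockDiagonal_apply]

open NormedSpace in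
lemma exp_bD {n m : ℕ} (V : Fin n → Matrix (Fin m) (Fin m) ℂ) :
    exp (bD V) = bD (fun j => exp (V j)) := by
  have hpi : exp V = fun j => exp (V j) := by
    letI : SeminormedRing (Matrix (Fin m) (Fin m) ℂ) := Matrix.linftyOpSemiNormedRing
    letI : NormedRing (Matrix (Fin m) (Fin m) ℂ) := Matrix.linftyOpNormedRing
    letI : NormedAlgebra ℂ (Matrix (Fin m) (Fin m) ℂ) := Matrix.linftyOpNormedAlgebra
    letI : NormedAlgebra ℚ (Matrix (Fin m) (Fin m) ℂ) := NormedAlgebra.restrictScalars ℚ ℂ _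
    exact Pi.exp_def V
  rw [bD_eq, exp_reindex, Matrix.exp_blockDiagonal, hpi, ← bD_eq]

lemma inversion {n m : ℕ} (hn : n ≠ 0) (θ : ℂ) (hθ : θ ≠ 0)
    (U : Fin n → Matrix (Fin m) (Fin m) ℂ) (i : Fin n) :
    (θ ^ (i : ℕ))⁻¹ • ((n : ℂ)⁻¹ • ∑ j, fourierMatrix n i j •
      (∑ k, ((starRingEnd ℂ) (fourierMatrix n j k) * θ ^ (k : ℕ)) • U k)) = U i := by
  ext a c
  simp only [Matrix.smul_apply, Matrix.sum_apply, smul_eq_mul]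
  have hterm : ∀ j k : Fin n, fourierMatrix n i j *
      (((starRingEnd ℂ) (fourierMatrix n j k) * θ ^ (k : ℕ)) * U k a c)
      = (θ ^ (k : ℕ) * U k a c) * eK n (((i : ℤ) - (k : ℤ)) * (j : ℤ)) := by
    intro j k
    rw [fourier_eK, fourier_eK, conj_eK,
      show ((i : ℤ) - (k : ℤ)) * (j : ℤ) = (i : ℤ) * (j : ℤ) + -((j : ℤ) * (k : ℤ)) by ring,
      eK_add]
    ring
  simp_rw [Finset.mul_sum, hterm]
  rw [Finset.sum_comm]
  simp_rw [← Finset.mul_sum, eK_sum n hn]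
  simp only [fin_dvd_iff, mul_ite, mul_zero, Finset.sum_ite_eq', Finset.mem_univ, if_true]
  have hn' : (n : ℂ) ≠ 0 := Nat.cast_ne_zero.mpr hn
  have hθi : θ ^ (i : ℕ) ≠ 0 := pow_ne_zero _ hθ
  field_simp


/-- The exponential of a block ε-circulant matrix is block ε-circulant:
`e^{C_ε(U)} = C_ε(Y)` where `Y = (1/n) D_ε^{-1} F W`, `W_j = e^{V_j}` and
`V = F^H D_ε U`, i.e. `V j = ∑ k, conj(ω^{jk}) θ^k • U k` and
`Y i = θ^{-i} (1/n) ∑ j, ω^{ij} • e^{V j}`. -/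
theorem exp_epsBlockCirculant {n m : ℕ} (ε θ : ℂ) (hθ : θ ≠ 0) (hθn : θ ^ n = ε)
    (U : Fin n → Matrix (Fin m) (Fin m) ℂ) :
    NormedSpace.exp (epsBlockCirculant ε U) =
      epsBlockCirculant ε (fun i =>
        (θ ^ (i : ℕ))⁻¹ • ((n : ℂ)⁻¹ •
          ∑ j, fourierMatrix n i j •
            NormedSpace.exp
              (∑ k, (starRingEnd ℂ (fourierMatrix n j k) * θ ^ (k : ℕ)) • U k))) := by
  rcases Nat.eq_zero_or_pos n with hn0 | hpos
  · subst hn0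
    ext ⟨i, a⟩ q
    exact i.elim0
  · have hn : n ≠ 0 := hpos.ne'
    set Vt : Fin n → Matrix (Fin m) (Fin m) ℂ :=
      fun j => ∑ k, ((starRingEnd ℂ) (fourierMatrix n j k) * θ ^ (k : ℕ)) • U k with hVt
    have h1 : epsBlockCirculant ε U = pM n m θ * bD Vt * qM n m θ := by
      rw [core hn θ ε hθ hθn]
      exact congrArg (epsBlockCirculant ε)
        (funext fun i => (inversion hn θ hθ U i).symm)
    rw [h1]
    let u : (Matrix (Fin n × Fin m) (Fin n × Fin m) ℂ)ˣ :=
      ⟨pM n m θ, qM n m θ, hPQ hn θ hθ, hQP hn θ hθ⟩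
    have h2 : NormedSpace.exp ((u : Matrix _ _ ℂ) * bD Vt * (↑u⁻¹ : Matrix _ _ ℂ))
        = (u : Matrix _ _ ℂ) * NormedSpace.exp (bD Vt) * (↑u⁻¹ : Matrix _ _ ℂ) :=
      Matrix.exp_units_conj u _
    rw [show ((u : Matrix _ _ ℂ)) = pM n m θ from rfl,
      show ((↑u⁻¹ : Matrix _ _ ℂ)) = qM n m θ from rfl] at h2
    rw [h2, exp_bD, core hn θ ε hθ hθn]
end

section
/- Truncated Taylor series bound for nonnegative matrices: let B ≥ 0 be a square nonnegative matrix and r a positive integer with ρ(B/(r+1)) < 1. Then 0 ≤ e^B − S_r(B) ≤ (B^r/r!)·(I − B/(r+1))^{-1} entrywise, where S_r(B) = Σ_{k=0}^{r−1} B^k/k!. -/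
open scoped ENNReal

section Aux
attribute [local instance] Matrix.linftyOpNormedRing Matrix.linftyOpNormedAlgebra

example {d : ℕ} : CompleteSpace (Matrix (Fin d) (Fin d) ℂ) := by infer_instance

lemma entry_norm_le_linfty' {d : ℕ} (M : Matrix (Fin d) (Fin d) ℂ) (i j : Fin d) :
    ‖M i j‖ ≤ ‖M‖ := by
  have h1 : ‖M i j‖₊ ≤ ∑ j', ‖M i j'‖₊ :=
    Finset.single_le_sum (f := fun j' => ‖M i j'‖₊) (fun _ _ => zero_le) (Finset.mem_univ j)
  have h2 : (∑ j', ‖M i j'‖₊) ≤ Finset.univ.sup fun i => ∑ j', ‖M i j'‖₊ :=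
    Finset.le_sup (f := fun i => ∑ j', ‖M i j'‖₊) (Finset.mem_univ i)
  rw [Matrix.linfty_opNorm_def]
  exact_mod_cast h1.trans h2

set_option maxHeartbeats 1000000 in
lemma geom_entry_bound' {d : ℕ} (A : Matrix (Fin d) (Fin d) ℝ)
    (hρ : spectralRadius ℂ (A.map (fun x => (x : ℂ))) < 1) :
    ∃ c : NNReal, c < 1 ∧ ∀ᶠ n : ℕ in Filter.atTop, ∀ i j, |(A ^ n) i j| ≤ (c:ℝ) ^ n := by
  obtain ⟨c, hc1, hc2⟩ := ENNReal.lt_iff_exists_nnreal_btwn.mp hρ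
  refine ⟨c, by exact_mod_cast hc2, ?_⟩
  have hg := spectrum.pow_nnnorm_pow_one_div_tendsto_nhds_spectralRadius
    (A.map (fun x => (x : ℂ)))
  have hev : ∀ᶠ n : ℕ in Filter.atTop,
      (‖(A.map (fun x => (x:ℂ))) ^ n‖₊ : ℝ≥0∞) ^ (1/(n:ℝ)) < c :=
    hg.eventually_lt_const hc1
  filter_upwards [hev, Filter.eventually_ge_atTop 1] with n hn hn1 i j
  have hnn : (‖(A.map (fun x => (x:ℂ))) ^ n‖₊ : ℝ≥0∞) ≤ (c : ℝ≥0∞) ^ (n:ℝ) := by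
    have := ENNReal.rpow_le_rpow hn.le (by positivity : (0:ℝ) ≤ (n:ℝ))
    rwa [← ENNReal.rpow_mul, one_div, inv_mul_cancel₀ (Nat.cast_ne_zero.mpr (by omega)), ENNReal.rpow_one] at this
  have hnorm : ‖(A.map (fun x => (x:ℂ))) ^ n‖ ≤ (c:ℝ) ^ n := by
    rw [ENNReal.rpow_natCast, ← ENNReal.coe_pow, ENNReal.coe_le_coe] at hnn
    exact_mod_cast hnn
  have hmap : (A.map (fun x => (x:ℂ))) ^ n = (A ^ n).map (fun x => (x:ℂ)) := by
    have := map_pow (Complex.ofRealHom.mapMatrix) A n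
    simp only [RingHom.mapMatrix_apply] at this
    exact this.symm
  rw [hmap] at hnorm
  have := (entry_norm_le_linfty' ((A ^ n).map (fun x => (x:ℂ))) i j).trans hnorm
  rw [Matrix.map_apply] at this
  simpa using this

end Aux

/-- Truncated Taylor series bound for nonnegative matrices: if `B ≥ 0` entrywise,
`r ≥ 1` and the spectral radius of `B/(r+1)` is less than `1`, then
`0 ≤ e^B − S_r(B) ≤ (B^r/r!)·(I − B/(r+1))^{-1}` entrywise, where
`S_r(B) = Σ_{k=0}^{r−1} B^k/k!`. -/
theorem truncated_taylor_bound {d : ℕ} (B : Matrix (Fin d) (Fin d) ℝ)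
    (hB : ∀ i j, 0 ≤ B i j) (r : ℕ) (hr : 1 ≤ r)
    (hρ : spectralRadius ℂ ((((r : ℝ) + 1)⁻¹ • B).map (fun x => (x : ℂ))) < 1) :
    ∀ i j,
      0 ≤ (NormedSpace.exp B - ∑ k ∈ Finset.range r, (k.factorial : ℝ)⁻¹ • B ^ k) i j ∧
      (NormedSpace.exp B - ∑ k ∈ Finset.range r, (k.factorial : ℝ)⁻¹ • B ^ k) i j ≤
        ((r.factorial : ℝ)⁻¹ • B ^ r * (1 - ((r : ℝ) + 1)⁻¹ • B)⁻¹) i j := by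
  classical
  set A : Matrix (Fin d) (Fin d) ℝ := ((r : ℝ) + 1)⁻¹ • B with hA
  have hrpos : (0:ℝ) < (r:ℝ) + 1 := by positivity
  -- nonnegativity of powers of B
  have hBpow : ∀ k i j, 0 ≤ (B ^ k) i j := by
    intro k
    induction k with
    | zero =>
      intro i j
      by_cases h : i = j <;> simp [Matrix.one_apply, h]
    | succ k ih =>
      intro i j
      rw [pow_succ, Matrix.mul_apply]
      exact Finset.sum_nonneg fun m _ => mul_nonneg (ih i m) (hB m j)
  -- entries of powers of A
  have hAn : ∀ (n : ℕ) i j, (A ^ n) i j = (((r : ℝ) + 1)⁻¹) ^ n * (B ^ n) i j := by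
    intro n i j
    rw [hA, smul_pow, Matrix.smul_apply, smul_eq_mul]
  -- geometric bound
  obtain ⟨c, hc1, hev⟩ := geom_entry_bound' A (by rw [hA]; exact hρ)
  have hAsum : ∀ m j, Summable fun n : ℕ => (A ^ n) m j := by
    intro m j
    refine Summable.of_norm_bounded_eventually_nat
      (summable_geometric_of_lt_one c.coe_nonneg (by exact_mod_cast hc1)) ?_
    filter_upwards [hev] with n hn
    simpa [Real.norm_eq_abs] using hn m j
  -- the geometric series matrix
  set S : Matrix (Fin d) (Fin d) ℝ := Matrix.of fun m j => ∑' n : ℕ, (A ^ n) m j with hS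
  have hSapp : ∀ m j, S m j = ∑' n : ℕ, (A ^ n) m j := fun m j => rfl
  have hunit : (1 - A) * S = 1 := by
    ext i' j'
    rw [Matrix.sub_mul, Matrix.one_mul, Matrix.sub_apply]
    have hAS : (A * S) i' j' = ∑' n : ℕ, (A ^ (n + 1)) i' j' := by
      rw [Matrix.mul_apply]
      calc ∑ k, A i' k * S k j'
          = ∑ k, ∑' n : ℕ, A i' k * (A ^ n) k j' := by
            refine Finset.sum_congr rfl fun k _ => ?_
            rw [hSapp, Summable.tsum_mul_left _ (hAsum k j')]
        _ = ∑' n : ℕ, ∑ k, A i' k * (A ^ n) k j' :=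
            (Summable.tsum_finsetSum fun k _ => (hAsum k j').mul_left _).symm
        _ = ∑' n : ℕ, (A ^ (n + 1)) i' j' := by
            refine tsum_congr fun n => ?_
            rw [pow_succ', Matrix.mul_apply]
    have hzero : S i' j' = (A ^ 0) i' j' + ∑' n : ℕ, (A ^ (n + 1)) i' j' := by
      rw [hSapp]
      exact Summable.tsum_eq_zero_add (hAsum i' j')
    rw [hAS, hzero]
    simp [Matrix.one_apply]
  have hSinv : (1 - A)⁻¹ = S := Matrix.inv_eq_right_inv hunit
  -- bound on entries of powers of B
  set M : ℝ := ∑ i', ∑ j', B i' j' with hM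
  have hM0 : 0 ≤ M := Finset.sum_nonneg fun i' _ => Finset.sum_nonneg fun j' _ => hB i' j'
  have hBpow_le : ∀ k i j, (B ^ k) i j ≤ M ^ k := by
    intro k
    induction k with
    | zero =>
      intro i j
      by_cases h : i = j <;> simp [Matrix.one_apply, h]
    | succ k ih =>
      intro i j
      rw [pow_succ, Matrix.mul_apply]
      calc ∑ m, (B ^ k) i m * B m j
          ≤ ∑ m, M ^ k * B m j :=
            Finset.sum_le_sum fun m _ => mul_le_mul_of_nonneg_right (ih i m) (hB m j)
        _ = M ^ k * ∑ m, B m j := by rw [← Finset.mul_sum]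
        _ ≤ M ^ k * M := by
            refine mul_le_mul_of_nonneg_left ?_ (pow_nonneg hM0 k)
            rw [hM]
            calc ∑ m, B m j
                ≤ ∑ m, ∑ j', B m j' :=
                  Finset.sum_le_sum fun m _ =>
                    Finset.single_le_sum (f := fun j' => B m j') (fun _ _ => hB m _)
                      (Finset.mem_univ j)
              _ = ∑ i', ∑ j', B i' j' := rfl
  -- summability of exp series entries
  have hexpsum : ∀ i j, Summable fun k : ℕ => ((k.factorial : ℝ)⁻¹ • B ^ k) i j := by
    intro i j
    refine Summable.of_norm_bounded
      (Real.summable_pow_div_factorial M) fun k => ?_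
    show ‖((k.factorial : ℝ)⁻¹ • B ^ k) i j‖ ≤ M ^ k / (k.factorial : ℝ)
    rw [Matrix.smul_apply, smul_eq_mul, Real.norm_eq_abs,
      abs_of_nonneg (mul_nonneg (by positivity) (hBpow k i j)), div_eq_inv_mul]
    exact mul_le_mul_of_nonneg_left (hBpow_le k i j) (by positivity)
  have hexp_entry : ∀ i j, (NormedSpace.exp B) i j
      = ∑' k : ℕ, ((k.factorial : ℝ)⁻¹ • B ^ k) i j := by
    intro i j
    rw [NormedSpace.exp_eq_tsum (𝕂 := ℝ)]
    show (∑' n : ℕ, (n.factorial : ℝ)⁻¹ • B ^ n) i j = _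
    have hs1 : Summable fun k : ℕ => (k.factorial : ℝ)⁻¹ • B ^ k :=
      Pi.summable.mpr fun i' => Pi.summable.mpr fun j' => hexpsum i' j'
    exact (congrFun (tsum_apply hs1) j).trans (tsum_apply (Pi.summable.mp hs1 i))
  intro i j
  set f : ℕ → ℝ := fun k => ((k.factorial : ℝ)⁻¹ • B ^ k) i j with hf
  have hf_nonneg : ∀ k, 0 ≤ f k := fun k => by
    simp only [hf, Matrix.smul_apply, smul_eq_mul]
    exact mul_nonneg (by positivity) (hBpow k i j)
  have hfsummable : Summable f := hexpsum i j
  have hdiff : (NormedSpace.exp B - ∑ k ∈ Finset.range r, (k.factorial : ℝ)⁻¹ • B ^ k) i j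
      = ∑' n : ℕ, f (n + r) := by
    rw [Matrix.sub_apply, hexp_entry i j]
    have hsum_apply : (∑ k ∈ Finset.range r, (k.factorial : ℝ)⁻¹ • B ^ k) i j
        = ∑ k ∈ Finset.range r, f k := by
      simp [hf, Matrix.sum_apply]
    rw [hsum_apply]
    have h := Summable.sum_add_tsum_nat_add (f := f) r hfsummable
    linarith [h]
  have hshift : Summable fun n : ℕ => f (n + r) := (summable_nat_add_iff r).mpr hfsummable
  set g : ℕ → ℝ := fun n => (r.factorial : ℝ)⁻¹ * ∑ m, (B ^ r) i m * (A ^ n) m j with hg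
  have hgsum_inner : Summable fun n : ℕ => ∑ m, (B ^ r) i m * (A ^ n) m j :=
    summable_sum fun m _ => (hAsum m j).mul_left _
  have hgsum : Summable g := hgsum_inner.mul_left _
  have hfact : ∀ n : ℕ, ((n + r).factorial : ℝ)⁻¹
      ≤ (r.factorial : ℝ)⁻¹ * (((r : ℝ) + 1)⁻¹) ^ n := by
    intro n
    have h1 : (r.factorial * (r + 1) ^ n : ℕ) ≤ (n + r).factorial := by
      have h := Nat.factorial_mul_pow_le_factorial (m := r) (n := n)
      simpa [Nat.add_comm] using h
    have h2 : (0:ℝ) < ((r.factorial * (r + 1) ^ n : ℕ) : ℝ) := by positivity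
    have h3 : ((r.factorial * (r + 1) ^ n : ℕ) : ℝ)⁻¹
        = (r.factorial : ℝ)⁻¹ * (((r : ℝ) + 1)⁻¹) ^ n := by
      push_cast
      rw [mul_inv, inv_pow]
    rw [← h3]
    exact inv_anti₀ h2 (by exact_mod_cast h1)
  have hfg : ∀ n, f (n + r) ≤ g n := by
    intro n
    have hBpowadd : (B ^ (n + r)) i j = ∑ m, (B ^ r) i m * (B ^ n) m j := by
      rw [add_comm, pow_add, Matrix.mul_apply]
    have hgalt : g n = ((r.factorial : ℝ)⁻¹ * (((r : ℝ) + 1)⁻¹) ^ n)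
        * ∑ m, (B ^ r) i m * (B ^ n) m j := by
      show (r.factorial : ℝ)⁻¹ * ∑ m, (B ^ r) i m * (A ^ n) m j = _
      simp only [hAn, Finset.mul_sum]
      exact Finset.sum_congr rfl fun m _ => by ring
    simp only [hf, Matrix.smul_apply, smul_eq_mul]
    rw [hBpowadd, hgalt]
    refine mul_le_mul_of_nonneg_right (hfact n) ?_
    exact Finset.sum_nonneg fun m _ => mul_nonneg (hBpow r i m) (hBpow n m j)
  have htsum_g : ∑' n : ℕ, g n = ((r.factorial : ℝ)⁻¹ • B ^ r * S) i j := by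
    calc ∑' n : ℕ, g n
        = (r.factorial : ℝ)⁻¹ * ∑' n : ℕ, ∑ m, (B ^ r) i m * (A ^ n) m j :=
          Summable.tsum_mul_left _ hgsum_inner
      _ = (r.factorial : ℝ)⁻¹ * ∑ m, ∑' n : ℕ, (B ^ r) i m * (A ^ n) m j := by
          rw [Summable.tsum_finsetSum fun m _ => (hAsum m j).mul_left _]
      _ = (r.factorial : ℝ)⁻¹ * ∑ m, (B ^ r) i m * S m j := by
          congr 1
          refine Finset.sum_congr rfl fun m _ => ?_
          rw [hSapp, Summable.tsum_mul_left _ (hAsum m j)]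
      _ = ((r.factorial : ℝ)⁻¹ • B ^ r * S) i j := by
          rw [smul_mul_assoc, Matrix.smul_apply, smul_eq_mul, Matrix.mul_apply]
  constructor
  · rw [hdiff]
    exact tsum_nonneg fun n => hf_nonneg (n + r)
  · rw [hdiff, hSinv, ← htsum_g]
    exact Summable.tsum_le_tsum hfg hshift hgsum
end
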